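/- For f μ-strongly convex and differentiable with L-Lipschitz gradient, and constant step size 0 < α ≤ 1/L, the full (deterministic) proximal gradient iteration x_{k+1} = Prox_{αλ‖·‖₁}(x_k − α∇f(x_k)) satisfies ‖x_{k+1} − x*‖₂² ≤ (1 − αμ)‖x_k − x*‖₂², where x* is the unique minimizer of F(x) = f(x) + λ‖x‖₁. -/

import Mathlib

/-!
With `p` the proximal gradient step from `x` and `g` the nonsmooth part, add three inequalities:
strong convexity of `f` between `x` and `z`, the descent lemma between `x` and `p`, and the
variational characterisation `⟪x - α • ∇f x - p, z - p⟫ ≤ α (g z - g p)` of the proximal point.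
Since `α L ≤ 1`, this gives `2α (F p - F z) ≤ (1 - αμ) ‖x - z‖² - ‖p - z‖²` for every `z`, and the
left side is nonnegative at the minimiser `z = x*`. Soft thresholding satisfies the variational
inequality for `g = λ ‖·‖₁` coordinatewise, by a case check on the real line.
-/

open scoped RealInnerProductSpace

noncomputable def softThreshold (c a : ℝ) : ℝ :=
  if a > c then a - c else if a < -c then a + c else 0

theorem sub_softThreshold_mul_le {c : ℝ} (hc : 0 ≤ c) (a z : ℝ) :
    (a - softThreshold c a) * (z - softThreshold c a) ≤ c * (|z| - |softThreshold c a|) := by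
  unfold softThreshold
  split_ifs with hpos hneg
  · rw [abs_of_pos (by linarith : 0 < a - c)]
    nlinarith [le_abs_self z]
  · rw [abs_of_neg (by linarith : a + c < 0)]
    nlinarith [neg_abs_le z]
  · have ha : |a| ≤ c := abs_le.mpr ⟨by linarith, by linarith⟩
    calc (a - 0) * (z - 0) ≤ |a| * |z| := by rw [← abs_mul]; simpa using le_abs_self (a * z)
      _ ≤ c * (|z| - |0|) := by rw [abs_zero, sub_zero]; gcongr

theorem EuclideanSpace.inner_sub_softThreshold_le {ι : Type*} [Fintype ι] {c : ℝ} (hc : 0 ≤ c)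
    {v p : EuclideanSpace ℝ ι} (hp : ∀ i, p i = softThreshold c (v i)) (z : EuclideanSpace ℝ ι) :
    ⟪v - p, z - p⟫ ≤ c * (∑ i, |z i| - ∑ i, |p i|) := by
  rw [PiLp.inner_apply, ← Finset.sum_sub_distrib, Finset.mul_sum]
  refine Finset.sum_le_sum fun i _ => ?_
  simpa [hp, mul_comm] using sub_softThreshold_mul_le hc (v i) (z i)

section ProxGrad

variable {E : Type*} [NormedAddCommGroup E] [InnerProductSpace ℝ E] {f : E → ℝ} {f' : E → E}

theorem le_add_inner_add_of_lipschitz_gradient [CompleteSpace E] {L : ℝ}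
    (hf : ∀ x, HasGradientAt f (f' x) x) (hlip : ∀ x y, ‖f' x - f' y‖ ≤ L * ‖x - y‖) (x y : E) :
    f y ≤ f x + ⟪f' x, y - x⟫ + L / 2 * ‖y - x‖ ^ 2 := by
  set v := y - x
  have hderiv (t : ℝ) : HasDerivAt (fun s : ℝ => f (x + s • v)) ⟪f' (x + t • v), v⟫ t := by
    have hline : HasDerivAt (fun s : ℝ => x + s • v) v t := by
      simpa using ((hasDerivAt_id t).smul_const v).const_add x
    have h := (hasGradientAt_iff_hasFDerivAt.mp (hf _)).comp_hasDerivAt t hline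
    simp only [InnerProductSpace.toDual_apply_apply] at h
    exact h
  have hbound (t : ℝ) :
      HasDerivAt (fun s : ℝ => f x + (s * ⟪f' x, v⟫ + L / 2 * s ^ 2 * ‖v‖ ^ 2))
        (⟪f' x, v⟫ + L * t * ‖v‖ ^ 2) t :=
    ((((hasDerivAt_id' t).mul_const _).add
      (((hasDerivAt_pow 2 t).const_mul (L / 2)).mul_const _)).const_add (f x)).congr_deriv
      (by push_cast; ring)
  have hslope (t : ℝ) (ht : 0 ≤ t) : ⟪f' (x + t • v), v⟫ ≤ ⟪f' x, v⟫ + L * t * ‖v‖ ^ 2 := by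
    have h := hlip (x + t • v) x
    rw [add_sub_cancel_left, norm_smul, Real.norm_of_nonneg ht] at h
    calc ⟪f' (x + t • v), v⟫ = ⟪f' x, v⟫ + ⟪f' (x + t • v) - f' x, v⟫ := by
          rw [inner_sub_left]; ring
      _ ≤ ⟪f' x, v⟫ + ‖f' (x + t • v) - f' x‖ * ‖v‖ := by gcongr; exact real_inner_le_norm _ _
      _ ≤ ⟪f' x, v⟫ + L * (t * ‖v‖) * ‖v‖ := by gcongr
      _ = ⟪f' x, v⟫ + L * t * ‖v‖ ^ 2 := by ring
  have h := image_le_of_deriv_right_le_deriv_boundary (a := 0) (b := 1)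
    (fun t _ => (hderiv t).continuousAt.continuousWithinAt)
    (fun t _ => (hderiv t).hasDerivWithinAt) (by simp)
    (fun t _ => (hbound t).continuousAt.continuousWithinAt)
    (fun t _ => (hbound t).hasDerivWithinAt) (fun t ht => hslope t ht.1)
    (Set.right_mem_Icc.2 zero_le_one)
  simp only [one_smul, one_pow, mul_one, v, add_sub_cancel] at h
  linarith

theorem two_mul_sub_le_of_prox_grad {g : E → ℝ} {μ L α : ℝ}
    (hsc : ∀ x y, f x + ⟪f' x, y - x⟫ + μ / 2 * ‖y - x‖ ^ 2 ≤ f y)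
    (hsmooth : ∀ x y, f y ≤ f x + ⟪f' x, y - x⟫ + L / 2 * ‖y - x‖ ^ 2)
    (hα : 0 ≤ α) (hαL : α * L ≤ 1) {x p : E}
    (hp : ∀ z, ⟪x - α • f' x - p, z - p⟫ ≤ α * (g z - g p)) (z : E) :
    2 * α * (f p + g p - (f z + g z)) ≤ (1 - α * μ) * ‖x - z‖ ^ 2 - ‖p - z‖ ^ 2 := by
  have hlower := hsc x z
  have hupper := hsmooth x p
  have hprox := hp z
  set u := x - p
  set w := z - p
  have hzx : z - x = w - u := by simp only [u, w]; abel
  have hpx : p - x = -u := by simp only [u]; abel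
  have hxz : x - z = u - w := by simp only [u, w]; abel
  have hpz : p - z = -w := by simp only [w]; abel
  have hstep : x - α • f' x - p = u - α • f' x := by simp only [u]; abel
  rw [hzx, norm_sub_rev, inner_sub_right, norm_sub_sq_real] at hlower
  rw [hpx, inner_neg_right, norm_neg] at hupper
  rw [hstep, inner_sub_left, real_inner_smul_left] at hprox
  rw [hxz, hpz, norm_neg, norm_sub_sq_real]
  have hquad : α * L * ‖u‖ ^ 2 ≤ ‖u‖ ^ 2 := mul_le_of_le_one_left (sq_nonneg _) hαL
  linear_combination (2 * α) * hlower + (2 * α) * hupper + 2 * hprox + hquad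

end ProxGrad

theorem prox_grad_linear_contraction_general (n : ℕ) (f : EuclideanSpace ℝ (Fin n) → ℝ)
    (grad : EuclideanSpace ℝ (Fin n) → EuclideanSpace ℝ (Fin n))
    (hgrad : ∀ x, HasGradientAt f (grad x) x)
    (μ L : ℝ)
    (hsc : ∀ x y : EuclideanSpace ℝ (Fin n),
      f x + inner ℝ (grad x) (y - x) + (μ / 2) * ‖y - x‖ ^ 2 ≤ f y)
    (hlip : ∀ x y, ‖grad x - grad y‖ ≤ L * ‖x - y‖)
    (lam : ℝ) (hlam : 0 < lam)
    (xs : EuclideanSpace ℝ (Fin n))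
    (hxsmin : ∀ x : EuclideanSpace ℝ (Fin n),
      f xs + lam * ∑ i, |xs i| ≤ f x + lam * ∑ i, |x i|)
    (α : ℝ) (hα : 0 < α) (hαL : α ≤ 1 / L)
    (xk : EuclideanSpace ℝ (Fin n)) :
    let xk1 : EuclideanSpace ℝ (Fin n) :=
      WithLp.toLp 2 (fun i => if (xk - α • grad xk) i > α * lam then (xk - α • grad xk) i - α * lam
               else if (xk - α • grad xk) i < -(α * lam) then (xk - α • grad xk) i + α * lam
               else 0)
    ‖xk1 - xs‖ ^ 2 ≤ (1 - α * μ) * ‖xk - xs‖ ^ 2 := by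
  intro xk1
  have hL : 0 < L := one_div_pos.mp (hα.trans_le hαL)
  have hprox (z : EuclideanSpace ℝ (Fin n)) : ⟪xk - α • grad xk - xk1, z - xk1⟫ ≤
      α * (lam * ∑ i, |z i| - lam * ∑ i, |xk1 i|) := by
    have h := EuclideanSpace.inner_sub_softThreshold_le (mul_nonneg hα.le hlam.le)
      (p := xk1) (fun i => rfl) z
    linarith
  have hstep := two_mul_sub_le_of_prox_grad (g := fun x => lam * ∑ i, |x i|) hsc
    (le_add_inner_add_of_lipschitz_gradient hgrad hlip) hα.le ((le_div_iff₀ hL).mp hαL) hprox xs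
  nlinarith [hxsmin xk1]

/-- linear contraction of the deterministic proximal gradient
    iteration for strongly convex `f` with Lipschitz gradient. -/
theorem prox_grad_linear_contraction (n : ℕ) (f : EuclideanSpace ℝ (Fin n) → ℝ)
    (grad : EuclideanSpace ℝ (Fin n) → EuclideanSpace ℝ (Fin n))
    (hgrad : ∀ x, HasGradientAt f (grad x) x)
    (μ L : ℝ) (hμ : 0 < μ) (hL : 0 < L)
    (hsc : ∀ x y : EuclideanSpace ℝ (Fin n),
      f x + inner ℝ (grad x) (y - x) + (μ / 2) * ‖y - x‖ ^ 2 ≤ f y)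
    (hlip : ∀ x y, ‖grad x - grad y‖ ≤ L * ‖x - y‖)
    (lam : ℝ) (hlam : 0 < lam)
    (xs : EuclideanSpace ℝ (Fin n))
    (hxsmin : ∀ x : EuclideanSpace ℝ (Fin n),
      f xs + lam * ∑ i, |xs i| ≤ f x + lam * ∑ i, |x i|)
    (α : ℝ) (hα : 0 < α) (hαL : α ≤ 1 / L)
    (xk : EuclideanSpace ℝ (Fin n)) :
    let xk1 : EuclideanSpace ℝ (Fin n) :=
      WithLp.toLp 2 (fun i => if (xk - α • grad xk) i > α * lam then (xk - α • grad xk) i - α * lam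
               else if (xk - α • grad xk) i < -(α * lam) then (xk - α • grad xk) i + α * lam
               else 0)
    ‖xk1 - xs‖ ^ 2 ≤ (1 - α * μ) * ‖xk - xs‖ ^ 2 :=
  prox_grad_linear_contraction_general n f grad hgrad μ L hsc hlip lam hlam xs hxsmin α hα hαL xk
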